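/- Let f : ℝ^{d_x} × ℝ^{d_u} → ℝ^{d_x}, h : ℝ^{d_x} × ℝ^{d_u} → ℝ^{d_y}, s : ℝ^{d_ω} → ℝ^{d_ω}, and g : ℝ^{d_ω} → ℝ^{d_u} be continuous. Suppose u(t) = g(ω(t)) where ω : [0, ∞) → ℝ^{d_ω} is differentiable with ω̇(t) = s(ω(t)). Let D be a real d_z × d_z matrix and F a real d_z × (d_y + d_u) matrix, let A ⊆ ℝ^{d_x} × ℝ^{d_ω}, and suppose T : ℝ^{d_x} × ℝ^{d_ω} → ℝ^{d_z} is differentiable and satisfies, for every (x, ω) ∈ A, that the derivative of T at (x, ω) applied to the vector (f(x, g(ω)), s(ω)) equals D T(x, ω) + F (h(x, g(ω)), g(ω)). Let x : [0, ∞) → ℝ^{d_x} be differentiable with ẋ(t) = f(x(t), u(t)) and (x(t), ω(t)) ∈ A for all t ≥ 0, and let z : [0, ∞) → ℝ^{d_z} be differentiable with ż(t) = D z(t) + F (h(x(t), u(t)), u(t)) for all t ≥ 0. Then the error e(t) := z(t) − T(x(t), ω(t)) satisfies ė(t) = D e(t) for all t ≥ 0, and hence e(t) = exp(tD) e(0);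 in particular, if D is diagonalizable over ℂ with all eigenvalues of real part at most −μ < 0, then ‖e(t)‖ ≤ M e^{−μ t} ‖e(0)‖ for some M ≥ 1 and all t ≥ 0. -/

import Mathlib

/-! The PDE for `T` says that `t ↦ T (x t, ω t)` obeys the observer equation, forcing term
included, so the forcing cancels in `e = z - T (x, ω)` and `ė = D e`; uniqueness for linear ODEs
gives `e t = exp (t D) e 0`. If `D = P diag(d) P⁻¹` over `ℂ`, then the `dᵢ` are the roots of the
characteristic polynomial and `exp (t D) = P diag(exp (t dᵢ)) P⁻¹`, so in the `ℓ∞` operator norm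
`‖exp (t D)‖ ≤ ‖P‖ ‖P⁻¹‖ e^{-μ t}`; passing to the Euclidean norm costs a factor `√d_z`. -/

open Matrix

/-- The Euclidean norm on `Fin n → ℝ`. -/
noncomputable def euclNorm {n : ℕ} (v : Fin n → ℝ) : ℝ :=
  ‖(WithLp.equiv 2 (Fin n → ℝ)).symm v‖

theorem HasDerivAt.sub_comp_of_fderiv_apply_eq {E ι : Type*} [NormedAddCommGroup E]
    [NormedSpace ℝ E] [Fintype ι] {D : Matrix ι ι ℝ} {T : E → ι → ℝ} {p : ℝ → E} {p' : E}
    {z : ℝ → ι → ℝ} {b : ι → ℝ} {t : ℝ} (hT : DifferentiableAt ℝ T (p t))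
    (hp : HasDerivAt p p' t) (hTp : fderiv ℝ T (p t) p' = D *ᵥ T (p t) + b)
    (hz : HasDerivAt z (D *ᵥ z t + b) t) :
    HasDerivAt (fun τ => z τ - T (p τ)) (D *ᵥ (z t - T (p t))) t := by
  have hTp' := hT.hasFDerivAt.comp_hasDerivAt t hp
  rw [hTp] at hTp'
  have := hz.sub hTp'
  rw [add_sub_add_right_eq_sub, ← mulVec_sub] at this
  exact this

theorem Matrix.mem_charpoly_roots_conj_diagonal {ι R : Type*} [Fintype ι] [DecidableEq ι]
    [CommRing R] [IsDomain R] {P : Matrix ι ι R} (hP : IsUnit P) (d : ι → R) (i : ι) :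
    d i ∈ (P * diagonal d * P⁻¹).charpoly.roots := by
  have hdiag : (P * diagonal d * P⁻¹).charpoly = (diagonal d).charpoly := by
    rw [charpoly_mul_comm, ← mul_assoc, nonsing_inv_mul _ ((isUnit_iff_isUnit_det P).1 hP),
      one_mul]
  rw [hdiag, charpoly_diagonal, Polynomial.roots_prod _ _
    (Finset.prod_ne_zero_iff.2 fun j _ => Polynomial.X_sub_C_ne_zero (d j))]
  simp

section LinftyOpNorm

open NormedSpace
open scoped Matrix.Norms.Operator

theorem HasDerivAt.mulVec_const {m n : Type*} [Fintype m] [Fintype n]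
    {c : ℝ → Matrix m n ℝ} {c' : Matrix m n ℝ} {t : ℝ} (hc : HasDerivAt c c' t) (v : n → ℝ) :
    HasDerivAt (fun τ => c τ *ᵥ v) (c' *ᵥ v) t :=
  ((mulVecBilin ℝ ℝ).flip v).toContinuousLinearMap.hasFDerivAt.comp_hasDerivAt (f := c) t hc

theorem Matrix.linfty_opNorm_map_ofReal {m n : Type*} [Fintype m] [Fintype n]
    (A : Matrix m n ℝ) : ‖A.map Complex.ofReal‖ = ‖A‖ := by
  simp [linfty_opNorm_def]

variable {ι : Type*} [Fintype ι] [DecidableEq ι]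

theorem Matrix.hasDerivAt_exp_smul_mulVec (D : Matrix ι ι ℝ) (v : ι → ℝ) (t : ℝ) :
    HasDerivAt (fun τ : ℝ => exp (τ • D) *ᵥ v) (D *ᵥ (exp (t • D) *ᵥ v)) t := by
  have := (hasDerivAt_exp_smul_const' D t).mulVec_const v
  rw [← mulVec_mulVec] at this
  exact this

theorem Matrix.eq_exp_smul_mulVec_of_hasDerivAt {D : Matrix ι ι ℝ} {e : ℝ → ι → ℝ}
    (he : ∀ t, 0 ≤ t → HasDerivAt e (D *ᵥ e t) t) {t : ℝ} (ht : 0 ≤ t) :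
    e t = exp (t • D) *ᵥ e 0 := by
  have hsol := fun τ => hasDerivAt_exp_smul_mulVec D (e 0) τ
  refine ODE_solution_unique (v := fun _ => D.mulVecLin.toContinuousLinearMap)
    (fun _ => ContinuousLinearMap.lipschitz _)
    (fun τ hτ => (he τ hτ.1).continuousAt.continuousWithinAt)
    (fun τ hτ => (he τ hτ.1).hasDerivWithinAt)
    (fun τ _ => (hsol τ).continuousAt.continuousWithinAt)
    (fun τ _ => (hsol τ).hasDerivWithinAt) (by simp) ⟨ht, le_rfl⟩

theorem Matrix.map_ofReal_exp (B : Matrix ι ι ℝ) :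
    (exp B).map Complex.ofReal = exp (B.map Complex.ofReal) :=
  map_exp Complex.ofRealHom.mapMatrix (continuous_id.matrix_map Complex.continuous_ofReal) B

theorem Matrix.norm_exp_smul_le_of_eq_conj_diagonal {D : Matrix ι ι ℝ} {P : Matrix ι ι ℂ}
    {d : ι → ℂ} (hP : IsUnit P) (hD : D.map Complex.ofReal = P * diagonal d * P⁻¹) {μ : ℝ}
    (hd : ∀ i, (d i).re ≤ -μ) {t : ℝ} (ht : 0 ≤ t) :
    ‖exp (t • D)‖ ≤ ‖P‖ * ‖P⁻¹‖ * Real.exp (-μ * t) := by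
  have hconj : (t • D).map Complex.ofReal = P * diagonal (t • d) * P⁻¹ := by
    have hsmul : (t • D).map Complex.ofReal = t • D.map Complex.ofReal := by ext; simp
    rw [hsmul, hD, diagonal_smul, Matrix.mul_smul, Matrix.smul_mul]
  have hdiag : ‖diagonal (exp (t • d))‖ ≤ Real.exp (-μ * t) := by
    rw [linfty_opNorm_diagonal]
    refine (pi_norm_le_iff_of_nonneg (Real.exp_nonneg _)).2 fun i => ?_
    rw [Pi.coe_exp, Pi.smul_apply, ← Complex.exp_eq_exp_ℂ, Complex.norm_exp, Complex.smul_re,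
      smul_eq_mul, mul_comm (-μ)]
    gcongr
    exact hd i
  calc ‖exp (t • D)‖ = ‖P * diagonal (exp (t • d)) * P⁻¹‖ := by
        rw [← linfty_opNorm_map_ofReal, map_ofReal_exp, hconj, exp_conj P _ hP, exp_diagonal]
    _ ≤ ‖P‖ * ‖diagonal (exp (t • d))‖ * ‖P⁻¹‖ := norm_mul₃_le
    _ ≤ ‖P‖ * Real.exp (-μ * t) * ‖P⁻¹‖ := by gcongr
    _ = ‖P‖ * ‖P⁻¹‖ * Real.exp (-μ * t) := by ring

theorem norm_le_euclNorm {n : ℕ} (v : Fin n → ℝ) : ‖v‖ ≤ euclNorm v :=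
  (pi_norm_le_iff_of_nonneg (norm_nonneg _)).2 fun i =>
    PiLp.norm_apply_le ((WithLp.equiv 2 (Fin n → ℝ)).symm v) i

theorem euclNorm_le_sqrt_mul_norm {n : ℕ} (v : Fin n → ℝ) : euclNorm v ≤ √n * ‖v‖ := by
  rw [euclNorm, EuclideanSpace.norm_eq]
  calc √(∑ i, ‖(WithLp.equiv 2 (Fin n → ℝ)).symm v i‖ ^ 2) ≤ √(∑ _i : Fin n, ‖v‖ ^ 2) := by
        gcongr with i
        exact norm_le_pi_norm v i
    _ = √n * ‖v‖ := by simp [Real.sqrt_mul, Real.sqrt_sq]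

theorem euclNorm_mulVec_le {m n : ℕ} (A : Matrix (Fin m) (Fin n) ℝ) (v : Fin n → ℝ) :
    euclNorm (A *ᵥ v) ≤ √m * ‖A‖ * euclNorm v :=
  calc euclNorm (A *ᵥ v) ≤ √m * ‖A *ᵥ v‖ := euclNorm_le_sqrt_mul_norm _
    _ ≤ √m * (‖A‖ * euclNorm v) := by
        gcongr
        exact (linfty_opNorm_mulVec A v).trans (by gcongr; exact norm_le_euclNorm v)
    _ = √m * ‖A‖ * euclNorm v := by ring

theorem Matrix.exists_euclNorm_exp_smul_mulVec_le {n : ℕ} {D : Matrix (Fin n) (Fin n) ℝ}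
    {P : Matrix (Fin n) (Fin n) ℂ} {d : Fin n → ℂ} (hP : IsUnit P)
    (hD : D.map Complex.ofReal = P * diagonal d * P⁻¹) {μ : ℝ} (hd : ∀ i, (d i).re ≤ -μ) :
    ∃ M : ℝ, 1 ≤ M ∧ ∀ t : ℝ, 0 ≤ t → ∀ v : Fin n → ℝ,
      euclNorm (exp (t • D) *ᵥ v) ≤ M * Real.exp (-μ * t) * euclNorm v := by
  refine ⟨max 1 (√n * (‖P‖ * ‖P⁻¹‖)), le_max_left _ _, fun t ht v => ?_⟩
  calc euclNorm (exp (t • D) *ᵥ v) ≤ √n * ‖exp (t • D)‖ * euclNorm v := euclNorm_mulVec_le _ _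
    _ ≤ √n * (‖P‖ * ‖P⁻¹‖ * Real.exp (-μ * t)) * euclNorm v := by
        gcongr
        · exact norm_nonneg _
        · exact norm_exp_smul_le_of_eq_conj_diagonal hP hD hd ht
    _ ≤ max 1 (√n * (‖P‖ * ‖P⁻¹‖)) * Real.exp (-μ * t) * euclNorm v := by
        rw [← mul_assoc]
        gcongr
        · exact norm_nonneg _
        · exact le_max_right _ _

end LinftyOpNorm

theorem kklu_observer_error_general
    (dx du dy dω dz : ℕ)
    (f : (Fin dx → ℝ) → (Fin du → ℝ) → Fin dx → ℝ)
    (h : (Fin dx → ℝ) → (Fin du → ℝ) → Fin dy → ℝ)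
    (s : (Fin dω → ℝ) → Fin dω → ℝ) (g : (Fin dω → ℝ) → Fin du → ℝ)
    (ω : ℝ → Fin dω → ℝ) (hω : ∀ t : ℝ, 0 ≤ t → HasDerivAt ω (s (ω t)) t)
    (u : ℝ → Fin du → ℝ) (hu : ∀ t, u t = g (ω t))
    (D : Matrix (Fin dz) (Fin dz) ℝ) (F : Matrix (Fin dz) (Fin dy ⊕ Fin du) ℝ)
    (A : Set ((Fin dx → ℝ) × (Fin dω → ℝ)))
    (T : (Fin dx → ℝ) × (Fin dω → ℝ) → Fin dz → ℝ) (hT : Differentiable ℝ T)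
    (hPDE : ∀ p ∈ A, fderiv ℝ T p (f p.1 (g p.2), s p.2) =
        D.mulVec (T p) + F.mulVec (Sum.elim (h p.1 (g p.2)) (g p.2)))
    (x : ℝ → Fin dx → ℝ) (hx : ∀ t : ℝ, 0 ≤ t → HasDerivAt x (f (x t) (u t)) t)
    (hxA : ∀ t : ℝ, 0 ≤ t → (x t, ω t) ∈ A)
    (z : ℝ → Fin dz → ℝ)
    (hz : ∀ t : ℝ, 0 ≤ t →
        HasDerivAt z (D.mulVec (z t) + F.mulVec (Sum.elim (h (x t) (u t)) (u t))) t)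
    (e : ℝ → Fin dz → ℝ) (he : ∀ t, e t = z t - T (x t, ω t)) :
    (∀ t : ℝ, 0 ≤ t → HasDerivAt e (D.mulVec (e t)) t) ∧
    (∀ t : ℝ, 0 ≤ t → e t = (NormedSpace.exp (t • D)).mulVec (e 0)) ∧
    (∀ μ : ℝ, 0 < μ →
      (∃ (P : Matrix (Fin dz) (Fin dz) ℂ) (d : Fin dz → ℂ),
          IsUnit P ∧ D.map Complex.ofReal = P * Matrix.diagonal d * P⁻¹) →
      (∀ lam ∈ (D.map Complex.ofReal).charpoly.roots, lam.re ≤ -μ) →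
      ∃ M : ℝ, 1 ≤ M ∧ ∀ t : ℝ, 0 ≤ t →
        euclNorm (e t) ≤ M * Real.exp (-μ * t) * euclNorm (e 0)) := by
  have herr : ∀ t : ℝ, 0 ≤ t → HasDerivAt e (D.mulVec (e t)) t := fun t ht => by
    rw [show e = fun τ => z τ - T (x τ, ω τ) from funext he]
    refine HasDerivAt.sub_comp_of_fderiv_apply_eq (hT _) ((hx t ht).prodMk (hω t ht)) ?_ (hz t ht)
    rw [hu t]
    exact hPDE _ (hxA t ht)
  have hsol : ∀ t : ℝ, 0 ≤ t → e t = (NormedSpace.exp (t • D)).mulVec (e 0) :=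
    fun t ht => eq_exp_smul_mulVec_of_hasDerivAt herr ht
  refine ⟨herr, hsol, fun μ _ ⟨P, d, hP, hD⟩ hroots => ?_⟩
  have hd : ∀ i, (d i).re ≤ -μ := fun i =>
    hroots _ (hD ▸ mem_charpoly_roots_conj_diagonal hP d i)
  obtain ⟨M, hM, hbound⟩ := exists_euclNorm_exp_smul_mulVec_le hP hD hd
  exact ⟨M, hM, fun t ht => hsol t ht ▸ hbound t ht (e 0)⟩

/-- **Error dynamics of the functional (KKLu) observer.** The input `u = g(ω)` is
generated by the exosystem `ω̇ = s(ω)`; the augmented state `(x, ω)` evolves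
autonomously, the observer `ż = D z + F (y, u)` is driven by the extended output
`(y, u)`, and `T` solves the corresponding PDE on `A`. Then the error
`e(t) = z(t) - T(x(t), ω(t))` satisfies `ė = D e`, hence `e(t) = exp(t D) e(0)`;
in particular, if `D` is diagonalizable over `ℂ` with all eigenvalues of real part
at most `-μ < 0`, then `‖e(t)‖ ≤ M e^{-μ t} ‖e(0)‖` for some `M ≥ 1` and all `t ≥ 0`. -/
theorem kklu_observer_error
    (dx du dy dω dz : ℕ)
    (f : (Fin dx → ℝ) → (Fin du → ℝ) → Fin dx → ℝ)
    (h : (Fin dx → ℝ) → (Fin du → ℝ) → Fin dy → ℝ)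
    (s : (Fin dω → ℝ) → Fin dω → ℝ) (g : (Fin dω → ℝ) → Fin du → ℝ)
    (hf : Continuous fun p : (Fin dx → ℝ) × (Fin du → ℝ) => f p.1 p.2)
    (hh : Continuous fun p : (Fin dx → ℝ) × (Fin du → ℝ) => h p.1 p.2)
    (hs : Continuous s) (hg : Continuous g)
    (ω : ℝ → Fin dω → ℝ) (hω : ∀ t : ℝ, 0 ≤ t → HasDerivAt ω (s (ω t)) t)
    (u : ℝ → Fin du → ℝ) (hu : ∀ t, u t = g (ω t))
    (D : Matrix (Fin dz) (Fin dz) ℝ) (F : Matrix (Fin dz) (Fin dy ⊕ Fin du) ℝ)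
    (A : Set ((Fin dx → ℝ) × (Fin dω → ℝ)))
    (T : (Fin dx → ℝ) × (Fin dω → ℝ) → Fin dz → ℝ) (hT : Differentiable ℝ T)
    (hPDE : ∀ p ∈ A, fderiv ℝ T p (f p.1 (g p.2), s p.2) =
        D.mulVec (T p) + F.mulVec (Sum.elim (h p.1 (g p.2)) (g p.2)))
    (x : ℝ → Fin dx → ℝ) (hx : ∀ t : ℝ, 0 ≤ t → HasDerivAt x (f (x t) (u t)) t)
    (hxA : ∀ t : ℝ, 0 ≤ t → (x t, ω t) ∈ A)
    (z : ℝ → Fin dz → ℝ)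
    (hz : ∀ t : ℝ, 0 ≤ t →
        HasDerivAt z (D.mulVec (z t) + F.mulVec (Sum.elim (h (x t) (u t)) (u t))) t)
    (e : ℝ → Fin dz → ℝ) (he : ∀ t, e t = z t - T (x t, ω t)) :
    (∀ t : ℝ, 0 ≤ t → HasDerivAt e (D.mulVec (e t)) t) ∧
    (∀ t : ℝ, 0 ≤ t → e t = (NormedSpace.exp (t • D)).mulVec (e 0)) ∧
    (∀ μ : ℝ, 0 < μ →
      (∃ (P : Matrix (Fin dz) (Fin dz) ℂ) (d : Fin dz → ℂ),
          IsUnit P ∧ D.map Complex.ofReal = P * Matrix.diagonal d * P⁻¹) →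
      (∀ lam ∈ (D.map Complex.ofReal).charpoly.roots, lam.re ≤ -μ) →
      ∃ M : ℝ, 1 ≤ M ∧ ∀ t : ℝ, 0 ≤ t →
        euclNorm (e t) ≤ M * Real.exp (-μ * t) * euclNorm (e 0)) :=
  kklu_observer_error_general dx du dy dω dz f h s g ω hω u hu D F A T hT hPDE x hx hxA z hz e he
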